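/- For every A ∈ ℝ^{m×n} and 1 ≤ k ≤ min(m,n), there exists a subset I ⊆ {1,…,n} with |I| = k and a matrix P ∈ ℝ^{k×n} such that ‖P‖_2 ≤ √(1+k(n−k)) and ‖A − A(:,I)·P‖_2 ≤ √(1+k(n−k))·σ_{k+1}(A), where σ_{k+1}(A) is the (k+1)-st largest singular value of A (taken as 0 if k = min(m,n)). -/

import Mathlib

open scoped Matrix.Norms.L2Operator

/-- The `j`-th largest singular value of a matrix, defined via approximation
numbers: `σ_j(A) = inf { ‖A - B‖ : rank B < j }` (spectral norm). -/
noncomputable def sv {m n : ℕ} (A : Matrix (Fin m) (Fin n) ℝ) (j : ℕ) : ℝ :=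
  sInf {r | ∃ B : Matrix (Fin m) (Fin n) ℝ, B.rank < j ∧ r = ‖A - B‖}

/-!
Approximate `A` to within `σ_{k+1}(A) + ε` by `X * C` with `C` of size `k × n`, and perturb `C`
so that some `k` of its columns are independent. If `g` selects `k` columns of `C` of maximal
volume `|det C(:,g)|`, Cramer's rule bounds every entry of `P = C(:,g)⁻¹ C` by `1`, while
`P(:,g) = 1`. With `S` the selection matrix, `P - Sᴴ` then vanishes on the selected columns,
so its Frobenius norm is at most `√(k(n-k))`, and the identities
`P Pᴴ = 1 + (P - Sᴴ)(P - Sᴴ)ᴴ` and `(1 - S P)ᴴ (1 - S P) = (1 - S Sᴴ) + (P - Sᴴ)ᴴ (P - Sᴴ)`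
bound `‖P‖` and `‖1 - S P‖` by `√(1 + k(n-k))`. Since `X C S P = X C`, the residual factors
as `A - A(:,g) P = (A - X C)(1 - S P)`. The infimum defining `σ_{k+1}` need not be attained;
the `ε` disappears by compactness of the set of admissible pairs `(g, P)`.
-/

open Filter Topology

namespace Matrix

section Selection

variable {α : Type*} {m n κ : Type*} [Fintype n] [DecidableEq n]

lemma mul_submatrix_one_id [NonAssocSemiring α] (M : Matrix m n α) (g : κ → n) :
    M * (1 : Matrix n n α).submatrix id g = M.submatrix id g :=
  mul_submatrix_one (Equiv.refl n) g M

lemma sub_submatrix_mul_eq_mul_one_sub [Ring α] [Fintype κ] {A Y : Matrix m n α} {g : κ → n}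
    {P : Matrix κ n α} (hY : Y.submatrix id g * P = Y) :
    A - A.submatrix id g * P = (A - Y) * (1 - (1 : Matrix n n α).submatrix id g * P) := by
  rw [Matrix.sub_mul, Matrix.mul_sub, Matrix.mul_sub, Matrix.mul_one, Matrix.mul_one,
    ← Matrix.mul_assoc, ← Matrix.mul_assoc, mul_submatrix_one_id, mul_submatrix_one_id, hY]
  abel

end Selection

section L2OpNorm

variable {𝕜 : Type*} [RCLike 𝕜] {n κ : Type*} [Fintype n] [DecidableEq n]

lemma l2_opNorm_sq_le_sum_sq {m : Type*} [Fintype m] (A : Matrix m n 𝕜) :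
    ‖A‖ ^ 2 ≤ ∑ i, ∑ j, ‖A i j‖ ^ 2 := by
  refine (Real.le_sqrt (norm_nonneg _) (by positivity)).1 ?_
  rw [l2_opNorm_def]
  refine ContinuousLinearMap.opNorm_le_bound _ (Real.sqrt_nonneg _) fun x => ?_
  rw [EuclideanSpace.norm_eq, EuclideanSpace.norm_eq, ← Real.sqrt_mul (by positivity),
    Finset.sum_mul]
  refine Real.sqrt_le_sqrt (Finset.sum_le_sum fun i _ => ?_)
  calc ‖(A *ᵥ WithLp.ofLp x) i‖ ^ 2 ≤ (∑ j, ‖A i j‖ * ‖x j‖) ^ 2 := by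
        gcongr
        exact (norm_sum_le _ _).trans (by simp [norm_mul])
    _ ≤ (∑ j, ‖A i j‖ ^ 2) * ∑ j, ‖x j‖ ^ 2 := Finset.sum_mul_sq_le_sq_mul_sq _ _ _

lemma norm_add_conjTranspose_mul_self_le {m : Type*} [Fintype m] {E : Matrix n n 𝕜}
    (hE : IsStarProjection E) (R : Matrix m n 𝕜) : ‖E + Rᴴ * R‖ ≤ 1 + ‖R‖ ^ 2 := by
  calc ‖E + Rᴴ * R‖ ≤ ‖E‖ + ‖Rᴴ * R‖ := norm_add_le _ _
    _ ≤ 1 + ‖R‖ ^ 2 := by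
      rw [l2_opNorm_conjTranspose_mul_self, ← sq]
      gcongr
      exact hE.norm_le

variable [Fintype κ] [DecidableEq κ] {S : Matrix n κ 𝕜} {P : Matrix κ n 𝕜}

lemma isStarProjection_one_sub_mul_conjTranspose (hS : Sᴴ * S = 1) :
    IsStarProjection (1 - S * Sᴴ) := by
  refine IsStarProjection.one_sub ⟨?_, ?_⟩
  · rw [IsIdempotentElem, Matrix.mul_assoc, ← Matrix.mul_assoc Sᴴ, hS, Matrix.one_mul]
  · simp [IsSelfAdjoint, star_eq_conjTranspose]

lemma l2_opNorm_sq_le_of_mul_eq_one (hS : Sᴴ * S = 1) (hPS : P * S = 1) :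
    ‖P‖ ^ 2 ≤ 1 + ‖P - Sᴴ‖ ^ 2 := by
  have hSP : Sᴴ * Pᴴ = 1 := by rw [← conjTranspose_mul, hPS, conjTranspose_one]
  have key : Pᴴᴴ * Pᴴ = 1 + (P - Sᴴ)ᴴᴴ * (P - Sᴴ)ᴴ := by
    simp only [conjTranspose_conjTranspose, conjTranspose_sub, Matrix.sub_mul, Matrix.mul_sub,
      hS, hPS, hSP]
    abel
  rw [← l2_opNorm_conjTranspose P, ← l2_opNorm_conjTranspose (P - Sᴴ), sq,
    ← l2_opNorm_conjTranspose_mul_self, key]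
  exact norm_add_conjTranspose_mul_self_le (.one _) _

lemma l2_opNorm_one_sub_mul_sq_le (hS : Sᴴ * S = 1) :
    ‖1 - S * P‖ ^ 2 ≤ 1 + ‖P - Sᴴ‖ ^ 2 := by
  have key : (1 - S * P)ᴴ * (1 - S * P) = (1 - S * Sᴴ) + (P - Sᴴ)ᴴ * (P - Sᴴ) := by
    simp only [conjTranspose_sub, conjTranspose_one, conjTranspose_mul,
      conjTranspose_conjTranspose, Matrix.sub_mul, Matrix.mul_sub, Matrix.one_mul,
      Matrix.mul_one, Matrix.mul_assoc]
    rw [← Matrix.mul_assoc Sᴴ S P, hS, Matrix.one_mul]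
    abel
  rw [sq, ← l2_opNorm_conjTranspose_mul_self, key]
  exact norm_add_conjTranspose_mul_self_le (isStarProjection_one_sub_mul_conjTranspose hS) _

variable {g : κ → n}

omit [Fintype κ] in
lemma conjTranspose_submatrix_one_mul_self (hg : Function.Injective g) :
    ((1 : Matrix n n 𝕜).submatrix id g)ᴴ * (1 : Matrix n n 𝕜).submatrix id g = 1 := by
  rw [mul_submatrix_one_id, conjTranspose_submatrix, conjTranspose_one, submatrix_submatrix,
    Function.comp_id, Function.id_comp, submatrix_one g hg]

lemma l2_opNorm_sub_submatrix_one_sq_le (hg : Function.Injective g) (hPg : P.submatrix id g = 1)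
    (hP : ∀ i j, ‖P i j‖ ≤ 1) :
    ‖P - (1 : Matrix n n 𝕜).submatrix g id‖ ^ 2 ≤
      Fintype.card κ * (Fintype.card n - Fintype.card κ) := by
  set R := P - (1 : Matrix n n 𝕜).submatrix g id
  have hR_sel : ∀ i t, R i (g t) = 0 := fun i t => by
    have hPit : P i (g t) = (1 : Matrix κ κ 𝕜) i t := congr_fun₂ hPg i t
    simp [R, hPit, one_apply, hg.eq_iff]
  have hrow : ∀ i, ∑ j, ‖R i j‖ ^ 2 ≤ Fintype.card n - Fintype.card κ := fun i => by
    rw [← Finset.sum_subset (Finset.subset_univ (Finset.univ.image g)ᶜ) fun j _ hj => by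
      obtain ⟨t, -, rfl⟩ := Finset.mem_image.1 (Finset.notMem_compl.1 hj)
      simp [hR_sel]]
    calc ∑ j ∈ (Finset.univ.image g)ᶜ, ‖R i j‖ ^ 2
        ≤ ∑ j ∈ (Finset.univ.image g)ᶜ, (1 : ℝ) := Finset.sum_le_sum fun j hj => by
          have hj' : ∀ t, g t ≠ j := by simpa using hj
          simpa [R, one_apply, hj'] using hP i j
      _ = Fintype.card n - Fintype.card κ := by
          rw [Finset.sum_const, nsmul_one, Finset.card_compl, Finset.card_image_of_injective _ hg,
            Finset.card_univ, Nat.cast_sub (Fintype.card_le_of_injective g hg)]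
  calc ‖R‖ ^ 2 ≤ ∑ i, ∑ j, ‖R i j‖ ^ 2 := l2_opNorm_sq_le_sum_sq R
    _ ≤ ∑ _i : κ, ((Fintype.card n : ℝ) - Fintype.card κ) :=
        Finset.sum_le_sum fun i _ => hrow i
    _ = _ := by rw [Finset.sum_const, Finset.card_univ, nsmul_eq_mul]

lemma l2_opNorm_le_sqrt_of_submatrix_eq_one (hg : Function.Injective g)
    (hPg : P.submatrix id g = 1) (hP : ∀ i j, ‖P i j‖ ≤ 1) :
    ‖P‖ ≤ √(1 + Fintype.card κ * (Fintype.card n - Fintype.card κ)) := by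
  refine Real.le_sqrt_of_sq_le <| (l2_opNorm_sq_le_of_mul_eq_one
    (conjTranspose_submatrix_one_mul_self hg) (by rw [mul_submatrix_one_id, hPg])).trans ?_
  rw [conjTranspose_submatrix, conjTranspose_one]
  gcongr
  exact l2_opNorm_sub_submatrix_one_sq_le hg hPg hP

lemma l2_opNorm_one_sub_submatrix_one_mul_le_sqrt (hg : Function.Injective g)
    (hPg : P.submatrix id g = 1) (hP : ∀ i j, ‖P i j‖ ≤ 1) :
    ‖1 - (1 : Matrix n n 𝕜).submatrix id g * P‖ ≤
      √(1 + Fintype.card κ * (Fintype.card n - Fintype.card κ)) := by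
  refine Real.le_sqrt_of_sq_le <| (l2_opNorm_one_sub_mul_sq_le
    (conjTranspose_submatrix_one_mul_self hg)).trans ?_
  rw [conjTranspose_submatrix, conjTranspose_one]
  gcongr
  exact l2_opNorm_sub_submatrix_one_sq_le hg hPg hP

end L2OpNorm

section Cramer

variable {K : Type*} [Field K] {κ ι : Type*} [Fintype κ] [DecidableEq κ]

lemma submatrix_inv_mul_apply (C : Matrix κ ι K) (g : κ → ι) (i : κ) (j : ι) :
    ((C.submatrix id g)⁻¹ * C) i j =
      (C.submatrix id g).det⁻¹ * (C.submatrix id (Function.update g i j)).det := by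
  have hcol : (C.submatrix id g).updateCol i (fun t => C t j) =
      C.submatrix id (Function.update g i j) := by
    ext t s
    rcases eq_or_ne s i with rfl | hs <;> simp [*]
  calc ((C.submatrix id g)⁻¹ * C) i j = ((C.submatrix id g)⁻¹ *ᵥ fun t => C t j) i := rfl
    _ = _ := by
      rw [inv_def, smul_mulVec, ← cramer_eq_adjugate_mulVec, Pi.smul_apply, cramer_apply,
        hcol, Ring.inverse_eq_inv', smul_eq_mul]

lemma injective_of_det_submatrix_ne_zero {C : Matrix κ ι K} {g : κ → ι}
    (h : (C.submatrix id g).det ≠ 0) : Function.Injective g := by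
  intro a b hab
  by_contra hne
  exact h (det_zero_of_column_eq hne fun r => by simp [hab])

lemma exists_abs_submatrix_inv_mul_le_one [LinearOrder K] [IsStrictOrderedRing K] [Fintype ι]
    (C : Matrix κ ι K) (h : ∃ g₀ : κ → ι, (C.submatrix id g₀).det ≠ 0) :
    ∃ g : κ → ι, (C.submatrix id g).det ≠ 0 ∧
      ∀ i j, |((C.submatrix id g)⁻¹ * C) i j| ≤ 1 := by
  obtain ⟨g₀, hg₀⟩ := h
  obtain ⟨g, -, hmax⟩ := Finset.exists_max_image Finset.univ
    (fun g => |(C.submatrix id g).det|) ⟨g₀, Finset.mem_univ _⟩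
  have hpos : 0 < |(C.submatrix id g).det| :=
    (abs_pos.2 hg₀).trans_le (hmax g₀ (Finset.mem_univ _))
  refine ⟨g, abs_pos.1 hpos, fun i j => ?_⟩
  rw [submatrix_inv_mul_apply, abs_mul, abs_inv, inv_mul_le_iff₀ hpos, mul_one]
  exact hmax _ (Finset.mem_univ _)

end Cramer

lemma exists_eq_mul_of_rank_le {R : Type*} [Field R] {m n : Type*} [Fintype n] [DecidableEq n]
    {k : ℕ} (B : Matrix m n R) (h : B.rank ≤ k) :
    ∃ (X : Matrix m (Fin k) R) (C : Matrix (Fin k) n R), B = X * C := by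
  set W := LinearMap.range B.mulVecLin
  let ψ : (Fin k → R) →ₗ[R] W :=
    (Module.finBasis R W).equivFun.symm.toLinearMap ∘ₗ LinearMap.funLeft R R (Fin.castLE h)
  have hψ : Function.Surjective ψ :=
    (Module.finBasis R W).equivFun.symm.surjective.comp
      (LinearMap.funLeft_surjective_of_injective _ _ _ (Fin.castLE_injective h))
  choose c hc using fun j => hψ ⟨B *ᵥ Pi.single j 1, LinearMap.mem_range_self _ _⟩
  refine ⟨LinearMap.toMatrix' (W.subtype ∘ₗ ψ), of fun i j => c j i, ?_⟩
  ext i j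
  have hcol : (ψ (c j) : m → R) i = B i j := by
    rw [hc j]
    simp
  calc B i j = (LinearMap.toMatrix' (W.subtype ∘ₗ ψ) *ᵥ c j) i := by
        rw [LinearMap.toMatrix'_mulVec]
        exact hcol.symm
    _ = _ := rfl

lemma eventually_det_add_smul_one_ne_zero {K : Type*} [Field K] [TopologicalSpace K] [T1Space K]
    {n : Type*} [Fintype n] [DecidableEq n] (M : Matrix n n K) (a : K) :
    ∀ᶠ t in 𝓝[≠] a, (M + t • (1 : Matrix n n K)).det ≠ 0 := by
  have hroots : {t | (-M).charpoly.IsRoot t}.Finite :=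
    Polynomial.finite_setOfPred_isRoot (charpoly_monic _).ne_zero
  filter_upwards [nhdsNE_of_nhdsNE_sdiff_finite univ_mem hroots] with t ht
  have : (-M).charpoly.eval t = (M + t • (1 : Matrix n n K)).det := by
    rw [eval_charpoly, sub_neg_eq_add, add_comm, smul_one_eq_diagonal]
    rfl
  simpa [this] using ht

lemma exists_det_submatrix_ne_zero_norm_sub_mul_lt {𝕜 : Type*} [RCLike 𝕜] {m n κ : Type*}
    [Fintype m] [Fintype n] [DecidableEq n] [Fintype κ] [DecidableEq κ] {e : κ → n}
    (he : Function.Injective e) {A : Matrix m n 𝕜} {X : Matrix m κ 𝕜} {C : Matrix κ n 𝕜}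
    {r : ℝ} (h : ‖A - X * C‖ < r) :
    ∃ C' : Matrix κ n 𝕜, (C'.submatrix id e).det ≠ 0 ∧ ‖A - X * C'‖ < r := by
  set E := (1 : Matrix n n 𝕜).submatrix e id
  have hE : ∀ t : 𝕜, (C + t • E).submatrix id e = C.submatrix id e + t • 1 := fun t => by
    ext i j
    simp [E, one_apply, he.eq_iff]
  have hdet : ∀ᶠ t in 𝓝[≠] (0 : 𝕜), ((C + t • E).submatrix id e).det ≠ 0 := by
    simpa only [hE] using eventually_det_add_smul_one_ne_zero (C.submatrix id e) 0
  have hnorm : ∀ᶠ t in 𝓝[≠] (0 : 𝕜), ‖A - X * (C + t • E)‖ < r := by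
    refine nhdsWithin_le_nhds ((Continuous.continuousAt ?_).eventually_lt continuousAt_const ?_)
    · fun_prop
    · simpa using h
  obtain ⟨t, hdet_t, hnorm_t⟩ := (hdet.and hnorm).exists
  exact ⟨C + t • E, hdet_t, hnorm_t⟩

end Matrix

lemma IsCompact.exists_le_of_forall_pos_le_add {X : Type*} [TopologicalSpace X] {K : Set X}
    (hK : IsCompact K) {f : X → ℝ} (hf : ContinuousOn f K) {a : ℝ}
    (h : ∀ ε > 0, ∃ x ∈ K, f x ≤ a + ε) : ∃ x ∈ K, f x ≤ a := by
  obtain ⟨x₁, hx₁, -⟩ := h 1 one_pos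
  obtain ⟨x, hx, hmin⟩ := hK.exists_isMinOn ⟨x₁, hx₁⟩ hf
  refine ⟨x, hx, le_of_forall_pos_le_add fun ε hε => ?_⟩
  obtain ⟨y, hy, hfy⟩ := h ε hε
  exact (hmin hy).trans hfy

lemma exists_norm_sub_mul_lt_sv_add {m n k : ℕ} (A : Matrix (Fin m) (Fin n) ℝ) {ε : ℝ}
    (hε : 0 < ε) : ∃ (X : Matrix (Fin m) (Fin k) ℝ) (C : Matrix (Fin k) (Fin n) ℝ),
      ‖A - X * C‖ < sv A (k + 1) + ε := by
  have hne :
      {r | ∃ B : Matrix (Fin m) (Fin n) ℝ, B.rank < k + 1 ∧ r = ‖A - B‖}.Nonempty :=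
    ⟨_, 0, by simp, rfl⟩
  obtain ⟨_, ⟨B, hB, rfl⟩, hlt⟩ := Real.lt_sInf_add_pos hne hε
  obtain ⟨X, C, rfl⟩ := B.exists_eq_mul_of_rank_le (Nat.lt_succ_iff.1 hB)
  exact ⟨X, C, hlt⟩

open Matrix in
lemma exists_column_id_norm_le_sv_add {m k l : ℕ} (A : Matrix (Fin m) (Fin (k + l)) ℝ)
    {ε : ℝ} (hε : 0 < ε) : ∃ (g : Fin k → Fin (k + l)) (P : Matrix (Fin k) (Fin (k + l)) ℝ),
      Function.Injective g ∧ ‖P‖ ≤ √(1 + (k : ℝ) * l) ∧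
      ‖A - A.submatrix id g * P‖ ≤ √(1 + (k : ℝ) * l) * (sv A (k + 1) + ε) := by
  obtain ⟨X, C, hXC⟩ := exists_norm_sub_mul_lt_sv_add A (k := k) hε
  obtain ⟨C', hC'det, hXC'⟩ :=
    exists_det_submatrix_ne_zero_norm_sub_mul_lt (Fin.castAdd_injective k l) hXC
  obtain ⟨g, hdet, hP⟩ := exists_abs_submatrix_inv_mul_le_one C' ⟨_, hC'det⟩
  have hunit : IsUnit (C'.submatrix id g).det := isUnit_iff_ne_zero.2 hdet
  have hg := injective_of_det_submatrix_ne_zero hdet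
  set P := (C'.submatrix id g)⁻¹ * C'
  have hPg : P.submatrix id g = 1 := nonsing_inv_mul _ hunit
  have hP' : ∀ i j, ‖P i j‖ ≤ 1 := by simpa only [Real.norm_eq_abs] using hP
  have hres : A - A.submatrix id g * P =
      (A - X * C') * (1 - (1 : Matrix (Fin (k + l)) (Fin (k + l)) ℝ).submatrix id g * P) :=
    sub_submatrix_mul_eq_mul_one_sub <| by
      rw [← mul_submatrix_one_id, Matrix.mul_assoc X C', mul_submatrix_one_id, Matrix.mul_assoc,
        mul_nonsing_inv_cancel_left _ _ hunit]
  have hPn := l2_opNorm_le_sqrt_of_submatrix_eq_one hg hPg hP'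
  have hSPn := l2_opNorm_one_sub_submatrix_one_mul_le_sqrt hg hPg hP'
  simp only [Fintype.card_fin, Nat.cast_add, add_sub_cancel_left] at hPn hSPn
  refine ⟨g, P, hg, hPn, ?_⟩
  rw [hres, mul_comm]
  exact (l2_opNorm_mul _ _).trans <|
    mul_le_mul hXC'.le hSPn (norm_nonneg _) ((norm_nonneg _).trans hXC'.le)

theorem column_id_exists_general (m k l : ℕ)
    (A : Matrix (Fin m) (Fin (k + l)) ℝ) :
    ∃ (g : Fin k → Fin (k + l)) (P : Matrix (Fin k) (Fin (k + l)) ℝ),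
      Function.Injective g ∧
      ‖P‖ ≤ Real.sqrt (1 + (k : ℝ) * l) ∧
      ‖A - (A.submatrix id g) * P‖ ≤ Real.sqrt (1 + (k : ℝ) * l) * sv A (k + 1) := by
  set c := √(1 + (k : ℝ) * l)
  have hc : 0 < c := Real.sqrt_pos.2 (by positivity)
  have hK : IsCompact ({g : Fin k → Fin (k + l) | Function.Injective g} ×ˢ
      Metric.closedBall (0 : Matrix (Fin k) (Fin (k + l)) ℝ) c) :=
    (Set.toFinite _).isCompact.prod (isCompact_closedBall _ _)
  have hf : Continuous fun p : (Fin k → Fin (k + l)) × Matrix (Fin k) (Fin (k + l)) ℝ =>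
      ‖A - A.submatrix id p.1 * p.2‖ :=
    continuous_prod_of_discrete_left.2 fun g => by fun_prop
  obtain ⟨⟨g, P⟩, ⟨hg, hP⟩, hres⟩ := hK.exists_le_of_forall_pos_le_add hf.continuousOn
    (a := c * sv A (k + 1)) fun ε hε => by
      obtain ⟨g, P, hg, hP, hres⟩ := exists_column_id_norm_le_sv_add A (div_pos hε hc)
      refine ⟨(g, P), ⟨hg, by simpa using hP⟩, ?_⟩
      rwa [mul_add, mul_div_cancel₀ _ hc.ne'] at hres
  exact ⟨g, P, hg, by simpa using hP, hres⟩

/-- Existence of a rank-`k` column interpolative decomposition (Liberty et al.,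
Lemma 1): with `n = k + l` columns, there is an injective column selection `g`
and coefficient matrix `P` with `‖P‖ ≤ √(1 + k l)` and
`‖A - A(:,I) P‖ ≤ √(1 + k l) σ_{k+1}(A)`. -/
theorem column_id_exists (m k l : ℕ) (hk : 1 ≤ k) (hkm : k ≤ m)
    (A : Matrix (Fin m) (Fin (k + l)) ℝ) :
    ∃ (g : Fin k → Fin (k + l)) (P : Matrix (Fin k) (Fin (k + l)) ℝ),
      Function.Injective g ∧
      ‖P‖ ≤ Real.sqrt (1 + (k : ℝ) * l) ∧
      ‖A - (A.submatrix id g) * P‖ ≤ Real.sqrt (1 + (k : ℝ) * l) * sv A (k + 1) :=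
  column_id_exists_general m k l A
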